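/- arXiv:1902.05478 — 2 statements merged into one kernel-verified Lean document; each statement's English description precedes it below -/
import Mathlib

section
/- (Complex instance of the main stability theorem with the trivial involution, case (a).) Let D ⊆ ℂ, let S ⊆ ℂ be a finite set, and let f : ℂ → ℂ satisfy f(q) ∈ S for all q ∈ D and the B-projection property with respect to B(p,q) = Re(p·q): Re(f(q)·q) > Re(s·q) for every q ∈ D and every s ∈ S with s ≠ f(q). Let N ≥ 1 and let (w_ij) be an N×N complex matrix with w_ij = w_ji for all i, j, and with w_ii = 0 for all i. Then for every update schedule σ : ℕ → {1,…,N} and every initial state x(0) ∈ S^N, the asynchronous Hopfield trajectory defined by x_i(t+1) = f(v_i(t)) if i = σ(t) and v_i(t) ∈ D, and x_i(t+1) = x_i(t) otherwise, where v_i(t) = Σⱼ w_ij · x_j(t), is eventually constant: there exists T such that x(t) = x(T) for all t ≥ T. -/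
/-!
The quadratic form `E(y) = Re (∑ₖ ∑ₗ wₖₗ yₖ yₗ)` is a Lyapunov function for the dynamics. Since `w`
is symmetric with zero diagonal, changing only the coordinate `i` from `a` to `b` raises `E` by
`2 Re ((b - a) vᵢ)`, where `vᵢ = ∑ⱼ wᵢⱼ yⱼ` is the local field; by the projection property this is
positive whenever the update actually changes the state. The states stay in the finite set `Sᴺ`,
so the energy cannot increase forever and the trajectory is eventually constant.
-/

open Finset Function

theorem exists_forall_ge_eq_of_finite_range_of_lt_of_ne {α β : Type*} [LinearOrder β]
    (x : ℕ → α) (E : α → β) (hfin : (Set.range x).Finite)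
    (hstep : ∀ t, x (t + 1) ≠ x t → E (x t) < E (x (t + 1))) :
    ∃ T, ∀ t, T ≤ t → x t = x T := by
  have hmono : Monotone (E ∘ x) := monotone_nat_of_le_succ fun t =>
    (eq_or_ne (x (t + 1)) (x t)).elim (fun h => by simp [h]) fun h => (hstep t h).le
  obtain ⟨_, ⟨T, rfl⟩, hmax⟩ := Set.exists_max_image _ E hfin (Set.range_nonempty x)
  refine ⟨T, fun t hT => ?_⟩
  induction t, hT using Nat.le_induction with
  | base => rfl
  | succ t hTt ih =>
    by_contra hne
    have hlt := hstep t (ih ▸ hne)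
    exact (hlt.trans_le (hmax _ ⟨t + 1, rfl⟩)).not_ge (hmono hTt)

section Hopfield

variable {ι : Type*} [Fintype ι]

theorem sum_sum_mul_update_mul_update [DecidableEq ι] {R : Type*} [CommRing R] (w : ι → ι → R)
    (hsym : ∀ i j, w i j = w j i) (hdiag : ∀ i, w i i = 0) (y : ι → R) (i : ι) (b : R) :
    ∑ k, ∑ l, w k l * update y i b k * update y i b l =
      ∑ k, ∑ l, w k l * y k * y l + 2 * (b - y i) * ∑ j, w i j * y j := by
  have hupd : update y i b = y + Pi.single i (b - y i) := by
    ext k; rcases eq_or_ne k i with rfl | hk <;> simp [*]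
  simp only [hupd, Pi.add_apply, mul_add, add_mul, sum_add_distrib, Pi.single_apply,
    mul_ite, ite_mul, mul_zero, zero_mul, sum_ite_eq', mem_univ, if_true, hdiag]
  simp only [sum_ite_irrel, sum_const_zero, sum_ite_eq', mem_univ, if_true, add_zero, hsym _ i]
  rw [add_assoc, ← sum_add_distrib, mul_sum]
  exact congrArg _ (sum_congr rfl fun _ _ => by ring)

def hopfieldEnergy (w : ι → ι → ℂ) (y : ι → ℂ) : ℝ :=
  (∑ k, ∑ l, w k l * y k * y l).re

theorem hopfieldEnergy_lt_update [DecidableEq ι] (w : ι → ι → ℂ) (hsym : ∀ i j, w i j = w j i)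
    (hdiag : ∀ i, w i i = 0) (y : ι → ℂ) (i : ι) (b : ℂ)
    (hlt : (y i * ∑ j, w i j * y j).re < (b * ∑ j, w i j * y j).re) :
    hopfieldEnergy w y < hopfieldEnergy w (update y i b) := by
  have hgain : (2 * (b - y i) * ∑ j, w i j * y j).re =
      2 * ((b * ∑ j, w i j * y j).re - (y i * ∑ j, w i j * y j).re) := by
    simp [mul_assoc, sub_mul]
  rw [hopfieldEnergy, hopfieldEnergy, sum_sum_mul_update_mul_update w hsym hdiag, Complex.add_re,
    hgain]
  linarith

def IsAsyncUpdate (D : Set ℂ) (f : ℂ → ℂ) (w : ι → ι → ℂ) (i₀ : ι) (y y' : ι → ℂ) : Prop :=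
  ∀ i, ((i = i₀ ∧ (∑ j, w i j * y j) ∈ D) → y' i = f (∑ j, w i j * y j)) ∧
    (¬(i = i₀ ∧ (∑ j, w i j * y j) ∈ D) → y' i = y i)

namespace IsAsyncUpdate

variable {D S : Set ℂ} {f : ℂ → ℂ} {w : ι → ι → ℂ} {i₀ : ι} {y y' : ι → ℂ}

theorem mem (h : IsAsyncUpdate D f w i₀ y y') (hfS : ∀ q ∈ D, f q ∈ S) (hy : ∀ i, y i ∈ S)
    (i : ι) : y' i ∈ S := by
  by_cases hi : i = i₀ ∧ (∑ j, w i j * y j) ∈ D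
  · exact (h i).1 hi ▸ hfS _ hi.2
  · exact (h i).2 hi ▸ hy i

theorem eq_update [DecidableEq ι] (h : IsAsyncUpdate D f w i₀ y y') (hne : y' ≠ y) :
    (∑ j, w i₀ j * y j) ∈ D ∧ y' = update y i₀ (f (∑ j, w i₀ j * y j)) := by
  have hD : (∑ j, w i₀ j * y j) ∈ D := by
    by_contra hD
    exact hne (funext fun i => (h i).2 fun hi => hD (hi.1 ▸ hi.2))
  refine ⟨hD, funext fun i => ?_⟩
  rcases eq_or_ne i i₀ with rfl | hi
  · simpa using (h i).1 ⟨rfl, hD⟩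
  · simpa [hi] using (h i).2 fun h => hi h.1

theorem hopfieldEnergy_lt [DecidableEq ι] (h : IsAsyncUpdate D f w i₀ y y') (hne : y' ≠ y)
    (hsym : ∀ i j, w i j = w j i) (hdiag : ∀ i, w i i = 0)
    (hproj : ∀ q ∈ D, ∀ s ∈ S, s ≠ f q → (s * q).re < (f q * q).re) (hy : y i₀ ∈ S) :
    hopfieldEnergy w y < hopfieldEnergy w y' := by
  obtain ⟨hD, rfl⟩ := h.eq_update hne
  refine hopfieldEnergy_lt_update w hsym hdiag y i₀ _ (hproj _ hD _ hy fun he => hne ?_)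
  rw [← he, update_eq_self]

end IsAsyncUpdate

end Hopfield

theorem complex_trivial_involution_hopfield_convergence_general (D S : Set ℂ)
    (hSfin : S.Finite)
    (f : ℂ → ℂ)
    (hfS : ∀ q ∈ D, f q ∈ S)
    (hproj : ∀ q ∈ D, ∀ s ∈ S, s ≠ f q → (s * q).re < (f q * q).re)
    (N : ℕ)
    (w : Fin N → Fin N → ℂ)
    (hsym : ∀ i j, w i j = w j i)
    (hdiag : ∀ i, w i i = 0)
    (σ : ℕ → Fin N) (x : ℕ → Fin N → ℂ)
    (hx0 : ∀ i, x 0 i ∈ S)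
    (hdyn : ∀ t i,
      ((i = σ t ∧ (∑ j, w i j * x t j) ∈ D) →
        x (t + 1) i = f (∑ j, w i j * x t j)) ∧
      (¬(i = σ t ∧ (∑ j, w i j * x t j) ∈ D) →
        x (t + 1) i = x t i)) :
    ∃ T, ∀ t, T ≤ t → x t = x T := by
  have hstep : ∀ t, IsAsyncUpdate D f w (σ t) (x t) (x (t + 1)) := hdyn
  have hxS : ∀ t i, x t i ∈ S := by
    intro t
    induction t with
    | zero => exact hx0
    | succ t ih => exact (hstep t).mem hfS ih
  have hfin : (Set.range x).Finite :=
    (Set.Finite.pi fun _ => hSfin).subset (Set.range_subset_iff.2 fun t i _ => hxS t i)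
  exact exists_forall_ge_eq_of_finite_range_of_lt_of_ne x (hopfieldEnergy w) hfin fun t hne =>
    (hstep t).hopfieldEnergy_lt hne hsym hdiag hproj (hxS t _)

theorem complex_trivial_involution_hopfield_convergence (D S : Set ℂ)
    (hSfin : S.Finite)
    (f : ℂ → ℂ)
    (hfS : ∀ q ∈ D, f q ∈ S)
    (hproj : ∀ q ∈ D, ∀ s ∈ S, s ≠ f q → (s * q).re < (f q * q).re)
    (N : ℕ) (hN : 1 ≤ N)
    (w : Fin N → Fin N → ℂ)
    (hsym : ∀ i j, w i j = w j i)
    (hdiag : ∀ i, w i i = 0)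
    (σ : ℕ → Fin N) (x : ℕ → Fin N → ℂ)
    (hx0 : ∀ i, x 0 i ∈ S)
    (hdyn : ∀ t i,
      ((i = σ t ∧ (∑ j, w i j * x t j) ∈ D) →
        x (t + 1) i = f (∑ j, w i j * x t j)) ∧
      (¬(i = σ t ∧ (∑ j, w i j * x t j) ∈ D) →
        x (t + 1) i = x t i)) :
    ∃ T, ∀ t, T ≤ t → x t = x T :=
  complex_trivial_involution_hopfield_convergence_general D S hSfin f hfS hproj N w hsym hdiag σ x
    hx0 hdyn
end

section
/- (Convergence of the corrected complex-valued multistate Hopfield network.) Let K ≥ 2 be an integer, let S_K = { exp(2πi k / K) : k = 0,…,K−1 } be the K-th roots of unity, let D_K = { z ∈ ℂ : z ≠ 0 and there exists u ∈ S_K with |arg(z · conj u)| < π/K }, and for z ∈ D_K let csgn(z) denote the unique u ∈ S_K with |arg(z · conj u)| < π/K. Let N ≥ 1 and let (w_ij) be an N×N complex matrix with w_ij = conj(w_ji) for all i, j, and with each diagonal entry w_ii a nonnegative real number (the case w_ii = 0 included). Then for every update schedule σ : ℕ → {1,…,N} and every initial state x(0) ∈ (S_K)^N, the asynchronous trajectory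 defined by x_i(t+1) = csgn(v_i(t)) if i = σ(t) and v_i(t) ∈ D_K, and x_i(t+1) = x_i(t) otherwise, where v_i(t) = Σⱼ w_ij · x_j(t), is eventually constant: there exists T such that x(t) = x(T) for all t ≥ T. -/
/-!
The real part of the Hermitian form `x ↦ x* W x` is a Lyapunov function. Changing one coordinate
`a` of the state to `b` raises it by `2 Re (v conj (b - a)) + w_ii |b - a|²`, where `v` is the
activation potential, and `csgn v` is the unique `K`-th root of unity `u` maximizing
`Re (v conj u)`: any other root is a rotation of it by an angle between `2π/K` and `2π - 2π/K`,
which moves the argument of `v conj u` out of `(-π/K, π/K)`. So every update that changes the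
state strictly raises the form, and since the state space `S_K^N` is finite, the trajectory is
eventually constant.
-/

open ComplexConjugate Matrix Real

theorem Real.cos_lt_cos_of_abs_lt_of_lt_abs {α θ ψ : ℝ} (hθ : |θ| < α) (hψ : α < |ψ|)
    (hψ' : |ψ| < 2 * π - α) : cos ψ < cos θ := by
  have hα : 0 ≤ α := (abs_nonneg θ).trans hθ.le
  have hθ' : cos α < cos θ := by
    rw [← cos_abs θ]
    exact cos_lt_cos_of_nonneg_of_le_pi (abs_nonneg θ) (by linarith) hθ
  suffices cos ψ < cos α from this.trans hθ'
  rw [← cos_abs ψ]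
  rcases le_or_gt |ψ| π with hle | hgt
  · exact cos_lt_cos_of_nonneg_of_le_pi hα hle hψ
  · rw [← cos_two_pi_sub]
    exact cos_lt_cos_of_nonneg_of_le_pi hα (by linarith) (by linarith)

namespace Complex

theorem re_mul_exp_ofReal_mul_I (z : ℂ) (φ : ℝ) :
    (z * exp (φ * I)).re = ‖z‖ * Real.cos (arg z + φ) := by
  conv_lhs => rw [← norm_mul_exp_arg_mul_I z]
  rw [mul_assoc, ← exp_add, ← add_mul, ← ofReal_add, re_ofReal_mul, exp_ofReal_mul_I_re]

theorem re_mul_exp_ofReal_mul_I_lt_re {z : ℂ} (hz : z ≠ 0) {α φ : ℝ} (hz' : |arg z| < α)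
    (hφ : 2 * α ≤ |φ|) (hφ' : |φ| ≤ 2 * π - 2 * α) : (z * exp (φ * I)).re < z.re := by
  have hcos : Real.cos (arg z + φ) < Real.cos (arg z) := by
    apply Real.cos_lt_cos_of_abs_lt_of_lt_abs hz'
    · rw [add_comm]
      linarith [abs_sub_abs_le_abs_add φ (arg z)]
    · linarith [abs_add_le (arg z) φ]
  rw [re_mul_exp_ofReal_mul_I, ← norm_mul_cos_arg z]
  exact mul_lt_mul_of_pos_left hcos (norm_pos_iff.mpr hz)

theorem exp_two_pi_I_div_mul_conj (K k k' : ℕ) :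
    exp (2 * π * I * k' / K) * conj (exp (2 * π * I * k / K)) =
      exp (↑(2 * π / K * ((k' : ℝ) - k)) * I) := by
  rw [← exp_conj, ← exp_add]
  congr 1
  simp only [map_div₀, map_mul, conj_ofReal, conj_I, map_natCast, map_ofNat]
  push_cast
  ring

theorem re_mul_conj_exp_lt_of_abs_arg_lt {K k k' : ℕ} (hk : k < K) (hk' : k' < K)
    (hne : k ≠ k') {v : ℂ} (hv : v ≠ 0)
    (harg : |arg (v * conj (exp (2 * π * I * k' / K)))| < π / K) :
    (v * conj (exp (2 * π * I * k / K))).re < (v * conj (exp (2 * π * I * k' / K))).re := by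
  set e : ℕ → ℂ := fun k => exp (2 * π * I * k / K)
  have hrot : v * conj (e k) = v * conj (e k') * exp (↑(2 * π / K * ((k' : ℝ) - k)) * I) := by
    have hunit : e k' * conj (e k') = 1 := by simpa using exp_two_pi_I_div_mul_conj K k' k'
    rw [← exp_two_pi_I_div_mul_conj]
    linear_combination (-(v * conj (e k))) * hunit
  have hKpos : (0 : ℝ) < K := Nat.cast_pos.mpr (Nat.zero_lt_of_lt hk)
  have hd : (1 : ℤ) ≤ |(k' : ℤ) - k| ∧ |(k' : ℤ) - k| ≤ K - 1 := by
    rw [le_abs, abs_le]; omega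
  have hd' : (1 : ℝ) ≤ |(k' : ℝ) - k| ∧ |(k' : ℝ) - k| ≤ K - 1 := by exact_mod_cast hd
  have hπK : 0 < π / K := by positivity
  have hφ : |2 * π / K * ((k' : ℝ) - k)| = 2 * (π / K) * |(k' : ℝ) - k| := by
    rw [abs_mul, abs_of_pos (by positivity)]
    ring
  have hfull : π / K * K = π := by field_simp
  rw [hrot]
  refine re_mul_exp_ofReal_mul_I_lt_re (mul_ne_zero hv ((map_ne_zero _).mpr (exp_ne_zero _)))
    harg ?_ ?_ <;> rw [hφ]
  · linarith [mul_le_mul_of_nonneg_left hd'.1 hπK.le]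
  · linarith [mul_le_mul_of_nonneg_left hd'.2 hπK.le]

end Complex

namespace Matrix

variable {ι : Type*} [Fintype ι] [DecidableEq ι] {w : Matrix ι ι ℂ}

theorem star_dotProduct_mulVec_add_single (hw : w.IsHermitian) (x : ι → ℂ) (i : ι) (d : ℂ) :
    star (x + Pi.single i d) ⬝ᵥ w *ᵥ (x + Pi.single i d) =
      star x ⬝ᵥ w *ᵥ x + (conj d * (w *ᵥ x) i + conj (conj d * (w *ᵥ x) i)) +
        conj d * w i i * d := by
  have hcross : star x ⬝ᵥ w *ᵥ Pi.single i d = conj (conj d * (w *ᵥ x) i) := by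
    rw [star_dotProduct, star_mulVec, ← dotProduct_mulVec, hw.eq, Pi.star_single,
      single_dotProduct]
    rfl
  have hdiag : Pi.single i (star d) ⬝ᵥ w *ᵥ Pi.single i d = conj d * w i i * d := by
    rw [single_dotProduct, mulVec_single]
    simp [mul_assoc]
  rw [star_add, mulVec_add, dotProduct_add, add_dotProduct, add_dotProduct, hcross,
    Pi.star_single, single_dotProduct, hdiag, Complex.star_def]
  ring

theorem re_star_dotProduct_mulVec_update (hw : w.IsHermitian) (x : ι → ℂ) (i : ι) (b : ℂ) :
    (star (Function.update x i b) ⬝ᵥ w *ᵥ Function.update x i b).re =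
      (star x ⬝ᵥ w *ᵥ x).re + 2 * ((w *ᵥ x) i * conj (b - x i)).re +
        (w i i).re * Complex.normSq (b - x i) := by
  have hupdate : Function.update x i b = x + Pi.single i (b - x i) := by
    ext j
    by_cases hj : j = i <;> simp [hj]
  rw [hupdate, star_dotProduct_mulVec_add_single hw, mul_right_comm,
    ← Complex.normSq_eq_conj_mul_self]
  simp only [Complex.add_re, Complex.conj_re, mul_comm (conj _), Complex.re_ofReal_mul]
  ring

theorem re_star_dotProduct_mulVec_lt_update (hw : w.IsHermitian) {x : ι → ℂ} {i : ι} {b : ℂ}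
    (hii : 0 ≤ (w i i).re) (hlt : ((w *ᵥ x) i * conj (x i)).re < ((w *ᵥ x) i * conj b).re) :
    (star x ⬝ᵥ w *ᵥ x).re < (star (Function.update x i b) ⬝ᵥ w *ᵥ Function.update x i b).re := by
  rw [re_star_dotProduct_mulVec_update hw, map_sub, mul_sub, Complex.sub_re]
  linarith [mul_nonneg hii (Complex.normSq_nonneg (b - x i))]

theorem update_exp_eq_or_re_star_dotProduct_mulVec_lt (hw : w.IsHermitian) {x : ι → ℂ} {i : ι}
    (hii : 0 ≤ (w i i).re) {K k k' : ℕ} (hk : k < K) (hk' : k' < K)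
    (hx : x i = Complex.exp (2 * π * Complex.I * k / K)) (hv : (w *ᵥ x) i ≠ 0)
    (harg : |((w *ᵥ x) i * conj (Complex.exp (2 * π * Complex.I * k' / K))).arg| < π / K) :
    Function.update x i (Complex.exp (2 * π * Complex.I * k' / K)) = x ∨
      (star x ⬝ᵥ w *ᵥ x).re <
        (star (Function.update x i (Complex.exp (2 * π * Complex.I * k' / K))) ⬝ᵥ
          w *ᵥ Function.update x i (Complex.exp (2 * π * Complex.I * k' / K))).re := by
  rcases eq_or_ne k k' with rfl | hne
  · exact .inl (Function.update_eq_self_iff.mpr hx.symm)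
  · refine .inr (re_star_dotProduct_mulVec_lt_update hw hii ?_)
    rw [hx]
    exact Complex.re_mul_conj_exp_lt_of_abs_arg_lt hk hk' hne hv harg

end Matrix

theorem Set.Finite.exists_forall_ge_eq_of_lyapunov {α β : Type*} [LinearOrder β] {x : ℕ → α}
    (hx : (Set.range x).Finite) (f : α → β) (hf : ∀ t, x (t + 1) = x t ∨ f (x t) < f (x (t + 1))) :
    ∃ T, ∀ t, T ≤ t → x t = x T := by
  obtain ⟨_, ⟨T, rfl⟩, hT⟩ := Set.exists_max_image _ f hx (Set.range_nonempty x)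
  have hmono : Monotone (f ∘ x) :=
    monotone_nat_of_le_succ fun t => (hf t).elim (fun h => by simp [h]) le_of_lt
  refine ⟨T, fun t hTt => ?_⟩
  induction t, hTt using Nat.le_induction with
  | base => rfl
  | succ t hTt ih =>
    rcases hf t with h | h
    · rw [h, ih]
    · exact absurd (hT _ ⟨t + 1, rfl⟩) (not_le.mpr ((hmono hTt).trans_lt h))

theorem corrected_multistate_cvhnn_convergence_general (K : ℕ)
    (SK : Set ℂ)
    (hSK : SK = {u : ℂ | ∃ k : ℕ, k < K ∧
      u = Complex.exp (2 * Real.pi * Complex.I * k / K)})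
    (DK : Set ℂ)
    (hDK : DK = {z : ℂ | z ≠ 0 ∧ ∃ u ∈ SK,
      |(z * (starRingEnd ℂ) u).arg| < Real.pi / K})
    (N : ℕ)
    (w : Fin N → Fin N → ℂ)
    (hsym : ∀ i j, w i j = (starRingEnd ℂ) (w j i))
    (hdiag : ∀ i, ∃ r : ℝ, 0 ≤ r ∧ w i i = (r : ℂ))
    (σ : ℕ → Fin N) (x : ℕ → Fin N → ℂ)
    (hx0 : ∀ i, x 0 i ∈ SK)
    (hdyn : ∀ t i,
      ((i = σ t ∧ (∑ j, w i j * x t j) ∈ DK) →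
        x (t + 1) i ∈ SK ∧
        |((∑ j, w i j * x t j) * (starRingEnd ℂ) (x (t + 1) i)).arg|
          < Real.pi / K) ∧
      (¬(i = σ t ∧ (∑ j, w i j * x t j) ∈ DK) →
        x (t + 1) i = x t i)) :
    ∃ T, ∀ t, T ≤ t → x t = x T := by
  have hw : IsHermitian w := IsHermitian.ext_iff.mpr fun i j => (hsym i j).symm
  have hmem : ∀ t i, x t i ∈ SK := by
    intro t
    induction t with
    | zero => exact hx0
    | succ t ih =>
      intro i
      by_cases h : i = σ t ∧ (∑ j, w i j * x t j) ∈ DK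
      · exact ((hdyn t i).1 h).1
      · rw [(hdyn t i).2 h]; exact ih i
  have hupdate : ∀ t, x (t + 1) = Function.update (x t) (σ t) (x (t + 1) (σ t)) := fun t =>
    Function.eq_update_iff.mpr ⟨rfl, fun j hj => (hdyn t j).2 fun h => hj h.1⟩
  refine Set.Finite.exists_forall_ge_eq_of_lyapunov ?_ (fun y => (star y ⬝ᵥ w *ᵥ y).re) fun t => ?_
  · refine (Set.Finite.pi' fun _ => ?_).subset (Set.range_subset_iff.mpr (hmem ·))
    rw [hSK]
    refine ((Set.finite_lt_nat K).image fun k : ℕ => Complex.exp (2 * π * Complex.I * k / K)).subset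
      ?_
    rintro _ ⟨k, hk, rfl⟩
    exact ⟨k, hk, rfl⟩
  by_cases hD : (∑ j, w (σ t) j * x t j) ∈ DK
  · obtain ⟨⟨k', hk', hxk'⟩, harg⟩ := hSK ▸ (hdyn t (σ t)).1 ⟨rfl, hD⟩
    obtain ⟨k, hk, hxk⟩ := hSK ▸ hmem t (σ t)
    obtain ⟨r, hr, hrr⟩ := hdiag (σ t)
    rw [hxk'] at harg
    rw [hupdate t, hxk']
    exact update_exp_eq_or_re_star_dotProduct_mulVec_lt hw (by simp [hrr, hr]) hk hk' hxk
      (hDK ▸ hD).1 harg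
  · exact .inl (funext fun j => (hdyn t j).2 fun h => hD (h.1 ▸ h.2))

theorem corrected_multistate_cvhnn_convergence (K : ℕ) (hK : 2 ≤ K)
    (SK : Set ℂ)
    (hSK : SK = {u : ℂ | ∃ k : ℕ, k < K ∧
      u = Complex.exp (2 * Real.pi * Complex.I * k / K)})
    (DK : Set ℂ)
    (hDK : DK = {z : ℂ | z ≠ 0 ∧ ∃ u ∈ SK,
      |(z * (starRingEnd ℂ) u).arg| < Real.pi / K})
    (N : ℕ) (hN : 1 ≤ N)
    (w : Fin N → Fin N → ℂ)
    (hsym : ∀ i j, w i j = (starRingEnd ℂ) (w j i))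
    (hdiag : ∀ i, ∃ r : ℝ, 0 ≤ r ∧ w i i = (r : ℂ))
    (σ : ℕ → Fin N) (x : ℕ → Fin N → ℂ)
    (hx0 : ∀ i, x 0 i ∈ SK)
    (hdyn : ∀ t i,
      ((i = σ t ∧ (∑ j, w i j * x t j) ∈ DK) →
        x (t + 1) i ∈ SK ∧
        |((∑ j, w i j * x t j) * (starRingEnd ℂ) (x (t + 1) i)).arg|
          < Real.pi / K) ∧
      (¬(i = σ t ∧ (∑ j, w i j * x t j) ∈ DK) →
        x (t + 1) i = x t i)) :
    ∃ T, ∀ t, T ≤ t → x t = x T :=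
  corrected_multistate_cvhnn_convergence_general K SK hSK DK hDK N w hsym hdiag σ x hx0 hdyn
end
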